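/- arXiv:1910.04967 — 7 statements merged into one kernel-verified Lean document; each statement's English description precedes it below -/
import Mathlib

section
/- If G is a graph that does not contain K_{3,3} as a subgraph, but the addition of any edge between two non-adjacent vertices creates a copy of K_{3,3}, then for any two non-adjacent vertices x and y of G, there exist vertices x1, x2 in N(x) and y1, y2 in N(y), with x1 ≠ x2 and y1 ≠ y2, such that every vertex of {x1, x2} is adjacent to every vertex of {y1, y2}. -/
open SimpleGraph

/-- `G` contains a subgraph isomorphic to `K_{3,3}`. -/
def ContainsK33 {V : Type*} (G : SimpleGraph V) : Prop :=
  ∃ f : Fin 3 ⊕ Fin 3 → V, Function.Injective f ∧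
    ∀ a b, (completeBipartiteGraph (Fin 3) (Fin 3)).Adj a b → G.Adj (f a) (f b)

/-- `G` is `K_{3,3}`-saturated. -/
def K33Saturated {V : Type*} (G : SimpleGraph V) : Prop :=
  ¬ ContainsK33 G ∧
    ∀ x y : V, x ≠ y → ¬ G.Adj x y → ContainsK33 (G ⊔ SimpleGraph.edge x y)

private lemma fin3_aux : ∀ i : Fin 3, ∃ i1 i2 : Fin 3, i1 ≠ i2 ∧ i1 ≠ i ∧ i2 ≠ i := by decide

private lemma key {V : Type*} (G : SimpleGraph V) (x y : V) (hxy : x ≠ y)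
    (f : Fin 3 ⊕ Fin 3 → V) (hinj : Function.Injective f)
    (hf : ∀ a b, (completeBipartiteGraph (Fin 3) (Fin 3)).Adj a b →
      (G ⊔ SimpleGraph.edge x y).Adj (f a) (f b))
    (i j : Fin 3) (hix : f (Sum.inl i) = x) (hjy : f (Sum.inr j) = y) :
    ∃ x1 x2 y1 y2 : V, x1 ∈ G.neighborSet x ∧ x2 ∈ G.neighborSet x ∧
      y1 ∈ G.neighborSet y ∧ y2 ∈ G.neighborSet y ∧ x1 ≠ x2 ∧ y1 ≠ y2 ∧
      G.Adj x1 y1 ∧ G.Adj x1 y2 ∧ G.Adj x2 y1 ∧ G.Adj x2 y2 := by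
  obtain ⟨j1, j2, hj12, hj1, hj2⟩ := fin3_aux j
  obtain ⟨i1, i2, hi12, hi1, hi2⟩ := fin3_aux i
  -- x's extra neighbors: f (inr j1), f (inr j2); y's: f (inl i1), f (inl i2)
  have hxn : ∀ j' : Fin 3, j' ≠ j → G.Adj x (f (Sum.inr j')) := by
    intro j' hj'
    have h := hf (Sum.inl i) (Sum.inr j') (by simp)
    rw [hix] at h
    rcases h with h | h
    · exact h
    · rw [edge_adj] at h
      rcases h.1 with ⟨_, hb⟩ | ⟨ha, _⟩
      · exact absurd (hinj (hb.trans hjy.symm)) (by simp [hj'])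
      · exact absurd ha hxy
  have hyn : ∀ i' : Fin 3, i' ≠ i → G.Adj y (f (Sum.inl i')) := by
    intro i' hi'
    have h := hf (Sum.inr j) (Sum.inl i') (by simp)
    rw [hjy] at h
    rcases h with h | h
    · exact h
    · rw [edge_adj] at h
      rcases h.1 with ⟨ha, _⟩ | ⟨_, hb⟩
      · exact absurd ha hxy.symm
      · exact absurd (hinj (hb.trans hix.symm)) (by simp [hi'])
  have hcross : ∀ (j' i' : Fin 3), j' ≠ j → i' ≠ i →
      G.Adj (f (Sum.inr j')) (f (Sum.inl i')) := by
    intro j' i' hj' hi'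
    have h := hf (Sum.inr j') (Sum.inl i') (by simp)
    rcases h with h | h
    · exact h
    · rw [edge_adj] at h
      rcases h.1 with ⟨ha, _⟩ | ⟨ha, _⟩
      · exact absurd (hinj (ha.trans hix.symm)) (by simp)
      · exact absurd (hinj (ha.trans hjy.symm)) (by simp [hj'])
  refine ⟨f (Sum.inr j1), f (Sum.inr j2), f (Sum.inl i1), f (Sum.inl i2),
    hxn j1 hj1, hxn j2 hj2, hyn i1 hi1, hyn i2 hi2,
    fun h => hj12 (by simpa using hinj h),
    fun h => hi12 (by simpa using hinj h),
    hcross j1 i1 hj1 hi1, hcross j1 i2 hj1 hi2,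
    hcross j2 i1 hj2 hi1, hcross j2 i2 hj2 hi2⟩

theorem stmt_0 {V : Type*} (G : SimpleGraph V) (hG : K33Saturated G)
    (x y : V) (hxy : x ≠ y) (hadj : ¬ G.Adj x y) :
    ∃ x1 x2 y1 y2 : V, x1 ∈ G.neighborSet x ∧ x2 ∈ G.neighborSet x ∧
      y1 ∈ G.neighborSet y ∧ y2 ∈ G.neighborSet y ∧ x1 ≠ x2 ∧ y1 ≠ y2 ∧
      G.Adj x1 y1 ∧ G.Adj x1 y2 ∧ G.Adj x2 y1 ∧ G.Adj x2 y2 := by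
  obtain ⟨f, hinj, hf⟩ := hG.2 x y hxy hadj
  -- either the copy uses the edge {x,y} or G contains K33
  by_cases hP : ∃ i j : Fin 3, (f (Sum.inl i) = x ∧ f (Sum.inr j) = y) ∨
      (f (Sum.inl i) = y ∧ f (Sum.inr j) = x)
  · obtain ⟨i, j, h | h⟩ := hP
    · exact key G x y hxy f hinj hf i j h.1 h.2
    · have hf' : ∀ a b, (completeBipartiteGraph (Fin 3) (Fin 3)).Adj a b →
          (G ⊔ SimpleGraph.edge y x).Adj (f a) (f b) := by
        intro a b hab
        have := hf a b hab
        rwa [show SimpleGraph.edge x y = SimpleGraph.edge y x by ext a b; rw [edge_adj, edge_adj]; tauto] at this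
      obtain ⟨x1, x2, y1, y2, h1, h2, h3, h4, h5, h6, h7, h8, h9, h10⟩ :=
        key G y x hxy.symm f hinj hf' i j h.1 h.2
      exact ⟨y1, y2, x1, x2, h3, h4, h1, h2, h6, h5, h7.symm, h9.symm, h8.symm, h10.symm⟩
  · exfalso
    apply hG.1
    refine ⟨f, hinj, fun a b hab => ?_⟩
    have h := hf a b hab
    rcases h with h | h
    · exact h
    · rw [edge_adj] at h
      exfalso
      apply hP
      match a, b, hab with
      | Sum.inl i, Sum.inr j, _ =>
        rcases h.1 with ⟨ha, hb⟩ | ⟨ha, hb⟩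
        · exact ⟨i, j, Or.inl ⟨ha, hb⟩⟩
        · exact ⟨i, j, Or.inr ⟨ha, hb⟩⟩
      | Sum.inr j, Sum.inl i, _ =>
        rcases h.1 with ⟨ha, hb⟩ | ⟨ha, hb⟩
        · exact ⟨i, j, Or.inr ⟨hb, ha⟩⟩
        · exact ⟨i, j, Or.inl ⟨hb, ha⟩⟩
end

section
/- The graph G_n defined as follows contains no subgraph isomorphic to K_{3,3}: for n ≥ 12, G_n is obtained from the join of the empty graph on {v1, v2} with the disjoint union of the 4-cycle v3 v4 v5 v6, the cycle v7 v8 ... v_{n-3}, and the single vertex v_{n-2}, by adding two new vertices v_{n-1}, v_n and the edges v_{n-1}v3, v_{n-1}v5, v_n v4, v_n v6. -/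
open SimpleGraph

/-- The graph `G_n` of Definition 2.1: vertex `i : Fin n` represents `v_{i+1}`.
Indices 0,1 are `v1,v2`; indices 2,3,4,5 form the 4-cycle `v3 v4 v5 v6`;
indices 6,…,n-4 form the cycle `v7 … v_{n-3}`; index n-3 is the vertex `v_{n-2}`;
indices n-2 and n-1 are the two added vertices `v_{n-1}` and `v_n`. -/
def Gn (n : ℕ) : SimpleGraph (Fin n) :=
  SimpleGraph.fromRel (fun i j =>
    -- join of {v1, v2} with C4 ∪ C_{n-9} ∪ K1
    ((i : ℕ) ≤ 1 ∧ 2 ≤ (j : ℕ) ∧ (j : ℕ) ≤ n - 3) ∨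
    -- the 4-cycle v3 v4 v5 v6
    ((i : ℕ) = 2 ∧ (j : ℕ) = 3) ∨ ((i : ℕ) = 3 ∧ (j : ℕ) = 4) ∨
    ((i : ℕ) = 4 ∧ (j : ℕ) = 5) ∨ ((i : ℕ) = 5 ∧ (j : ℕ) = 2) ∨
    -- the cycle v7 v8 … v_{n-3}
    (6 ≤ (i : ℕ) ∧ (j : ℕ) = (i : ℕ) + 1 ∧ (j : ℕ) ≤ n - 4) ∨
    ((i : ℕ) = n - 4 ∧ (j : ℕ) = 6) ∨
    -- edges v_{n-1}v3, v_{n-1}v5, v_n v4, v_n v6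
    ((i : ℕ) = n - 2 ∧ ((j : ℕ) = 2 ∨ (j : ℕ) = 4)) ∨
    ((i : ℕ) = n - 1 ∧ ((j : ℕ) = 3 ∨ (j : ℕ) = 5)))

def GnRel (n a b : ℕ) : Prop :=
  (a ≤ 1 ∧ 2 ≤ b ∧ b ≤ n - 3) ∨
  (a = 2 ∧ b = 3) ∨ (a = 3 ∧ b = 4) ∨
  (a = 4 ∧ b = 5) ∨ (a = 5 ∧ b = 2) ∨
  (6 ≤ a ∧ b = a + 1 ∧ b ≤ n - 4) ∨
  (a = n - 4 ∧ b = 6) ∨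
  (a = n - 2 ∧ (b = 2 ∨ b = 4)) ∨
  (a = n - 1 ∧ (b = 3 ∨ b = 5))

lemma L0 {n a b : ℕ} (hn : 12 ≤ n) (h : GnRel n a b ∨ GnRel n b a)
    (ha : a ≤ 1) (hb : b ≤ 1) : False := by
  unfold GnRel at h; omega

lemma L1 {n a b c d : ℕ} (hn : 12 ≤ n)
    (hbc : b ≠ c) (hbd : b ≠ d) (hcd : c ≠ d)
    (hab : GnRel n a b ∨ GnRel n b a) (hac : GnRel n a c ∨ GnRel n c a)
    (had : GnRel n a d ∨ GnRel n d a) : a ≤ n - 4 := by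
  unfold GnRel at hab hac had; omega

lemma L2 {n a b c d : ℕ} (hn : 12 ≤ n) (ha : 2 ≤ a)
    (hb : 2 ≤ b) (hb' : b ≤ n - 3) (hc : 2 ≤ c) (hc' : c ≤ n - 3)
    (hd : 2 ≤ d) (hd' : d ≤ n - 3)
    (hbc : b ≠ c) (hbd : b ≠ d) (hcd : c ≠ d)
    (hab : GnRel n a b ∨ GnRel n b a) (hac : GnRel n a c ∨ GnRel n c a)
    (had : GnRel n a d ∨ GnRel n d a) : False := by
  unfold GnRel at hab hac had; omega

/-- If one side of the K33 has all indices in [2, n-4], derive a contradiction. -/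
lemma sideCase {n : ℕ} (hn : 12 ≤ n) {t0 t1 t2 u0 u1 u2 : ℕ}
    (ht0 : 2 ≤ t0) (ht1 : 2 ≤ t1) (ht2 : 2 ≤ t2)
    (hb0 : t0 ≤ n - 4) (hb1 : t1 ≤ n - 4) (hb2 : t2 ≤ n - 4)
    (htd01 : t0 ≠ t1) (htd02 : t0 ≠ t2) (htd12 : t1 ≠ t2)
    (hud01 : u0 ≠ u1) (hud02 : u0 ≠ u2) (hud12 : u1 ≠ u2)
    (h00 : GnRel n u0 t0 ∨ GnRel n t0 u0) (h01 : GnRel n u0 t1 ∨ GnRel n t1 u0)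
    (h02 : GnRel n u0 t2 ∨ GnRel n t2 u0)
    (h10 : GnRel n u1 t0 ∨ GnRel n t0 u1) (h11 : GnRel n u1 t1 ∨ GnRel n t1 u1)
    (h12 : GnRel n u1 t2 ∨ GnRel n t2 u1)
    (h20 : GnRel n u2 t0 ∨ GnRel n t0 u2) (h21 : GnRel n u2 t1 ∨ GnRel n t1 u2)
    (h22 : GnRel n u2 t2 ∨ GnRel n t2 u2) : False := by
  have hpick : 2 ≤ u0 ∨ 2 ≤ u1 ∨ 2 ≤ u2 := by omega
  rcases hpick with hu | hu | hu
  · exact L2 hn hu ht0 (by omega) ht1 (by omega) ht2 (by omega)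
      htd01 htd02 htd12 h00 h01 h02
  · exact L2 hn hu ht0 (by omega) ht1 (by omega) ht2 (by omega)
      htd01 htd02 htd12 h10 h11 h12
  · exact L2 hn hu ht0 (by omega) ht1 (by omega) ht2 (by omega)
      htd01 htd02 htd12 h20 h21 h22

theorem stmt_4 (n : ℕ) (hn : 12 ≤ n) : ¬ ContainsK33 (Gn n) := by
  rintro ⟨f, hinj, hadj⟩
  set v : Fin 3 → ℕ := fun i => ((f (Sum.inl i)) : ℕ) with hv
  set w : Fin 3 → ℕ := fun j => ((f (Sum.inr j)) : ℕ) with hw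
  have hvd : ∀ i i' : Fin 3, i ≠ i' → v i ≠ v i' := by
    intro i i' hii h
    exact hii (Sum.inl.inj (hinj (Fin.ext h)))
  have hwd : ∀ j j' : Fin 3, j ≠ j' → w j ≠ w j' := by
    intro j j' hjj h
    exact hjj (Sum.inr.inj (hinj (Fin.ext h)))
  have hR : ∀ i j : Fin 3, GnRel n (v i) (w j) ∨ GnRel n (w j) (v i) := by
    intro i j
    have h := hadj (Sum.inl i) (Sum.inr j) (by simp)
    rw [Gn, SimpleGraph.fromRel_adj] at h
    exact h.2
  -- all vertices have index ≤ n - 4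
  have hvb : ∀ i : Fin 3, v i ≤ n - 4 := fun i =>
    L1 hn (hwd 0 1 (by decide)) (hwd 0 2 (by decide)) (hwd 1 2 (by decide))
      (hR i 0) (hR i 1) (hR i 2)
  have hwb : ∀ j : Fin 3, w j ≤ n - 4 := fun j =>
    L1 hn (hvd 0 1 (by decide)) (hvd 0 2 (by decide)) (hvd 1 2 (by decide))
      ((hR 0 j).symm) ((hR 1 j).symm) ((hR 2 j).symm)
  by_cases hall : 2 ≤ v 0 ∧ 2 ≤ v 1 ∧ 2 ≤ v 2
  · exact sideCase hn hall.1 hall.2.1 hall.2.2 (hvb 0) (hvb 1) (hvb 2)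
      (hvd 0 1 (by decide)) (hvd 0 2 (by decide)) (hvd 1 2 (by decide))
      (hwd 0 1 (by decide)) (hwd 0 2 (by decide)) (hwd 1 2 (by decide))
      ((hR 0 0).symm) ((hR 1 0).symm) ((hR 2 0).symm)
      ((hR 0 1).symm) ((hR 1 1).symm) ((hR 2 1).symm)
      ((hR 0 2).symm) ((hR 1 2).symm) ((hR 2 2).symm)
  · -- some v i ≤ 1, hence all w j ≥ 2
    have hsome : v 0 ≤ 1 ∨ v 1 ≤ 1 ∨ v 2 ≤ 1 := by omega
    have hwge : ∀ j : Fin 3, 2 ≤ w j := by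
      intro j
      by_contra h
      rcases hsome with h' | h' | h'
      · exact L0 hn (hR 0 j) h' (by omega)
      · exact L0 hn (hR 1 j) h' (by omega)
      · exact L0 hn (hR 2 j) h' (by omega)
    exact sideCase hn (hwge 0) (hwge 1) (hwge 2) (hwb 0) (hwb 1) (hwb 2)
      (hwd 0 1 (by decide)) (hwd 0 2 (by decide)) (hwd 1 2 (by decide))
      (hvd 0 1 (by decide)) (hvd 0 2 (by decide)) (hvd 1 2 (by decide))
      (hR 0 0) (hR 0 1) (hR 0 2)
      (hR 1 0) (hR 1 1) (hR 1 2)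
      (hR 2 0) (hR 2 1) (hR 2 2)
end

section
/- For all n ≥ 12, the saturation number sat(n, K_{3,3}) is at most 3n - 9. -/
open SimpleGraph

/-!
Write `n = 9 + m` with `m ≥ 3`. Join two non-adjacent hubs `0, 1` to a 4-cycle `2-3-4-5`, to a
vertex `6` and to every vertex of an `m`-cycle, and attach two ears `7 ~ 2, 4` and `8 ~ 3, 5`.
This graph has `18 + 3m = 3n - 9` edges.

There is no `K_{3,3}`: the vertices `6, 7, 8` have degree two, so they are not used, and as the
hubs are not adjacent, one side avoids them. The other side contains a non-hub vertex, with three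
neighbours that are neither hubs nor among `6, 7, 8`; but each vertex of the two cycles has only
two such neighbours, its neighbours on its cycle.

Every non-edge `xy` closes a `K_{3,3}`. If `x` is adjacent to both hubs and `y ≠ 6`, then `y` has
two neighbours `q₁, q₂` adjacent to both hubs, and `{x, q₁, q₂} × {y, 0, 1}` is a `K_{3,3}` minus
`xy`; if `y = 6`, swap `x` and `y`. The non-edges left join hubs and ears, and are completed on
`{x, 3, 5} × {y, 2, 4}`.
-/

open Function

section General

variable {V W : Type*} {G : SimpleGraph V} {H : SimpleGraph W}

theorem ContainsK33.map (f : G →g H) (hf : Injective f) (h : ContainsK33 G) : ContainsK33 H := by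
  obtain ⟨g, hg, hadj⟩ := h
  exact ⟨f ∘ g, hf.comp hg, fun a b hab => f.map_adj (hadj a b hab)⟩

theorem K33Saturated.of_iso (e : G ≃g H) (hG : K33Saturated G) : K33Saturated H := by
  refine ⟨fun h => hG.1 (h.map e.symm.toHom e.symm.injective), fun x y hxy hnadj => ?_⟩
  obtain ⟨x, rfl⟩ := e.surjective x
  obtain ⟨y, rfl⟩ := e.surjective y
  refine (hG.2 x y (by simpa using hxy) (by simpa [e.map_adj_iff] using hnadj)).map
    ⟨e, fun {a b} hab => ?_⟩ e.injective
  simpa [edge_adj, e.injective.eq_iff, e.map_adj_iff] using hab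

theorem SimpleGraph.Iso.ncard_edgeSet_eq (e : G ≃g H) : G.edgeSet.ncard = H.edgeSet.ncard := by
  rw [← Nat.card_coe_set_eq, ← Nat.card_coe_set_eq, Nat.card_congr e.mapEdgeSet]

theorem SimpleGraph.ncard_edgeSet_sum [Finite V] [Finite W] (G : SimpleGraph V)
    (H : SimpleGraph W) : (G ⊕g H).edgeSet.ncard = G.edgeSet.ncard + H.edgeSet.ncard := by
  simp only [← Nat.card_coe_set_eq, Nat.card_congr edgeSetSumEquiv, Nat.card_sum]

theorem SimpleGraph.ncard_edgeSet_cycleGraph (k : ℕ) :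
    (cycleGraph (k + 3)).edgeSet.ncard = k + 3 := by
  have := (cycleGraph (k + 3)).sum_degrees_eq_twice_card_edges
  simp only [cycleGraph_degree_three_le, Finset.sum_const, Finset.card_univ, Fintype.card_fin,
    smul_eq_mul] at this
  rw [← coe_edgeFinset, Set.ncard_coe_finset]
  omega

theorem Fin.sub_one_ne_add_one {k : ℕ} (i : Fin (k + 3)) : i - 1 ≠ i + 1 := by
  rw [Ne, sub_eq_iff_eq_add, add_assoc, left_eq_add]
  exact ne_of_beq_false rfl

theorem containsK33_iff : ContainsK33 G ↔
    ∃ a b : Fin 3 → V, Injective a ∧ Injective b ∧ ∀ i j, G.Adj (a i) (b j) := by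
  constructor
  · rintro ⟨f, hf, hadj⟩
    exact ⟨f ∘ Sum.inl, f ∘ Sum.inr, hf.comp Sum.inl_injective, hf.comp Sum.inr_injective,
      fun i j => hadj _ _ (by simp)⟩
  · rintro ⟨a, b, ha, hb, hab⟩
    refine ⟨Sum.elim a b, ?_, ?_⟩
    · rintro (i | i) (j | j) h
      · exact congrArg _ (ha h)
      · exact absurd h (hab i j).ne
      · exact absurd h (hab j i).ne'
      · exact congrArg _ (hb h)
    · rintro (i | i) (j | j) h
      · simp at h
      · exact hab i j
      · exact (hab j i).symm
      · simp at h

theorem containsK33_sup_edge {x y u w q₁ q₂ : V} (hxy : x ≠ y) (hnadj : ¬G.Adj x y)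
    (hyu : y ≠ u) (hyw : y ≠ w) (huw : u ≠ w) (hq : q₁ ≠ q₂)
    (hx : x ∈ G.commonNeighbors u w) (hq₁ : q₁ ∈ G.commonNeighbors u w ∩ G.neighborSet y)
    (hq₂ : q₂ ∈ G.commonNeighbors u w ∩ G.neighborSet y) :
    ContainsK33 (G ⊔ edge x y) := by
  simp only [Set.mem_inter_iff, mem_commonNeighbors, mem_neighborSet] at hx hq₁ hq₂
  have hxq₁ : x ≠ q₁ := by rintro rfl; exact hnadj hq₁.2.symm
  have hxq₂ : x ≠ q₂ := by rintro rfl; exact hnadj hq₂.2.symm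
  refine containsK33_iff.2 ⟨![x, q₁, q₂], ![y, u, w], ?_, ?_, ?_⟩
  · intro i j h
    fin_cases i <;> fin_cases j <;> simp_all [eq_comm]
  · intro i j h
    fin_cases i <;> fin_cases j <;> simp_all [eq_comm]
  · intro i j
    fin_cases i <;> fin_cases j <;>
      simp [edge_adj, hxy, hx.1.symm, hx.2.symm, hq₁.1.1.symm, hq₁.1.2.symm, hq₁.2.symm,
        hq₂.1.1.symm, hq₂.1.2.symm, hq₂.2.symm]

theorem exists_ne_ne_of_injective {t : Fin 3 → V} (ht : Injective t) (a b : V) :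
    ∃ i, t i ≠ a ∧ t i ≠ b := by
  by_contra! h
  have hsub : Set.range t ⊆ {a, b} := by
    rintro _ ⟨i, rfl⟩
    by_cases hi : t i = a
    exacts [Or.inl hi, Or.inr (h i hi)]
  have := Set.ncard_le_ncard hsub (Set.toFinite _)
  rw [Set.ncard_range_of_injective ht, Nat.card_fin] at this
  have := Set.ncard_insert_le a {b}
  simp only [Set.ncard_singleton] at this
  omega

def SimpleGraph.HasAtMostTwoNeighborsOutside (G : SimpleGraph V) (S : Set V) (v : V) : Prop :=
  ∃ a b, ∀ t ∉ S, G.Adj v t → t = a ∨ t = b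

theorem SimpleGraph.HasAtMostTwoNeighborsOutside.mono {S S' : Set V} {v : V}
    (h : G.HasAtMostTwoNeighborsOutside S v) (hSS' : S ⊆ S') :
    G.HasAtMostTwoNeighborsOutside S' v := by
  obtain ⟨a, b, hab⟩ := h
  exact ⟨a, b, fun t ht => hab t fun h => ht (hSS' h)⟩

theorem SimpleGraph.HasAtMostTwoNeighborsOutside.not_forall_adj {S : Set V} {v : V}
    (h : G.HasAtMostTwoNeighborsOutside S v) {t : Fin 3 → V} (ht : Injective t)
    (htS : ∀ i, t i ∉ S) : ¬∀ i, G.Adj v (t i) := by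
  intro hadj
  obtain ⟨a, b, hab⟩ := h
  obtain ⟨i, hia, hib⟩ := exists_ne_ne_of_injective ht a b
  exact (hab _ (htS i) (hadj i)).elim hia hib

section Sparse

variable {h₀ h₁ : V} {T : Set V}

theorem not_forall_adj_of_sparse (hT : ∀ v ∈ T, G.HasAtMostTwoNeighborsOutside ∅ v)
    (hsparse : ∀ v ∉ insert h₀ (insert h₁ T),
      G.HasAtMostTwoNeighborsOutside (insert h₀ (insert h₁ T)) v)
    {a b : Fin 3 → V} (ha : Injective a) (hb : Injective b) (hbh : ∀ j, b j ≠ h₀ ∧ b j ≠ h₁) :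
    ¬∀ i j, G.Adj (a i) (b j) := by
  intro hab
  have haT : ∀ i, a i ∉ T := fun i hi => (hT _ hi).not_forall_adj hb (by simp) (hab i)
  have hbT : ∀ j, b j ∉ T := fun j hj =>
    (hT _ hj).not_forall_adj ha (by simp) fun i => (hab i j).symm
  obtain ⟨i, hi₀, hi₁⟩ := exists_ne_ne_of_injective ha h₀ h₁
  refine (hsparse (a i) ?_).not_forall_adj hb ?_ (hab i)
  · simp [hi₀, hi₁, haT i]
  · intro j
    simp [(hbh j).1, (hbh j).2, hbT j]

theorem not_containsK33_of_sparse (hh : ¬G.Adj h₀ h₁)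
    (hT : ∀ v ∈ T, G.HasAtMostTwoNeighborsOutside ∅ v)
    (hsparse : ∀ v ∉ insert h₀ (insert h₁ T),
      G.HasAtMostTwoNeighborsOutside (insert h₀ (insert h₁ T)) v) :
    ¬ContainsK33 G := by
  rintro h
  obtain ⟨a, b, ha, hb, hab⟩ := containsK33_iff.1 h
  by_cases hbh : ∀ j, b j ≠ h₀ ∧ b j ≠ h₁
  · exact not_forall_adj_of_sparse hT hsparse ha hb hbh hab
  by_cases hah : ∀ i, a i ≠ h₀ ∧ a i ≠ h₁
  · exact not_forall_adj_of_sparse hT hsparse hb ha hah fun i j => (hab j i).symm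
  push Not at hbh hah
  obtain ⟨i, hi⟩ := hah
  obtain ⟨j, hj⟩ := hbh
  have := hab i j
  rcases eq_or_ne (a i) h₀ with hi₀ | hi₀ <;> rcases eq_or_ne (b j) h₀ with hj₀ | hj₀
  all_goals simp_all [G.adj_comm]

end Sparse

end General

def core : SimpleGraph (Fin 9) :=
  fromRel fun a b => (a.val, b.val) ∈
    [(0, 2), (0, 3), (0, 4), (0, 5), (0, 6), (1, 2), (1, 3), (1, 4), (1, 5), (1, 6),
      (2, 3), (3, 4), (4, 5), (5, 2), (7, 2), (7, 4), (8, 3), (8, 5)]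

instance : DecidableRel core.Adj := fun a b => by unfold core; infer_instance

def spokes (k : ℕ) : Set (Sym2 (Fin 9 ⊕ Fin (k + 3))) :=
  Set.range (fun i => s(.inl 0, .inr i)) ∪ Set.range (fun i => s(.inl 1, .inr i))

def satGraph (k : ℕ) : SimpleGraph (Fin 9 ⊕ Fin (k + 3)) :=
  (core ⊕g cycleGraph (k + 3)) ⊔ fromEdgeSet (spokes k)

namespace satGraph

variable {k : ℕ}

@[simp] theorem adj_inl_inl {a b : Fin 9} :
    (satGraph k).Adj (.inl a) (.inl b) ↔ core.Adj a b := by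
  simp [satGraph, spokes]

@[simp] theorem adj_inr_inr {i j : Fin (k + 3)} :
    (satGraph k).Adj (.inr i) (.inr j) ↔ (cycleGraph (k + 3)).Adj i j := by
  simp [satGraph, spokes]

@[simp] theorem adj_inl_inr {a : Fin 9} {i : Fin (k + 3)} :
    (satGraph k).Adj (.inl a) (.inr i) ↔ a = 0 ∨ a = 1 := by
  simp [satGraph, spokes, eq_comm]

@[simp] theorem adj_inr_inl {a : Fin 9} {i : Fin (k + 3)} :
    (satGraph k).Adj (.inr i) (.inl a) ↔ a = 0 ∨ a = 1 := by
  rw [adj_comm, adj_inl_inr]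

theorem hasAtMostTwoNeighborsOutside_inl {c : Fin 9} (hc : c ≠ 0 ∧ c ≠ 1) {S : Set (Fin 9)}
    (h : core.HasAtMostTwoNeighborsOutside S c) :
    (satGraph k).HasAtMostTwoNeighborsOutside (Sum.inl '' S) (.inl c) := by
  obtain ⟨a, b, hab⟩ := h
  refine ⟨.inl a, .inl b, ?_⟩
  rintro (t | t) ht hadj
  · simpa using hab t (by simpa using ht) (by simpa using hadj)
  · simp [hc] at hadj

theorem hasAtMostTwoNeighborsOutside_inr (i : Fin (k + 3)) :
    (satGraph k).HasAtMostTwoNeighborsOutside {.inl 0, .inl 1} (.inr i) := by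
  refine ⟨.inr (i - 1), .inr (i + 1), ?_⟩
  rintro (t | t) ht hadj
  · simp_all
  · have : t ∈ (cycleGraph (k + 3)).neighborSet i := by simpa using hadj
    simpa [cycleGraph_neighborSet] using this

theorem not_containsK33 : ¬ContainsK33 (satGraph k) := by
  refine not_containsK33_of_sparse (h₀ := .inl 0) (h₁ := .inl 1) (T := {.inl 6, .inl 7, .inl 8})
    (by rw [adj_inl_inl]; decide) ?_ ?_
  · rintro v (rfl | rfl | rfl) <;>
      refine (hasAtMostTwoNeighborsOutside_inl (S := ∅) (by decide) ?_).mono (by simp) <;>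
      unfold HasAtMostTwoNeighborsOutside <;> decide
  · rintro (c | i) hv
    · simp only [Set.mem_insert_iff, Sum.inl.injEq, Set.mem_singleton_iff] at hv
      refine (hasAtMostTwoNeighborsOutside_inl (S := {0, 1, 6, 7, 8}) (by tauto) ?_).mono
        (by simp [Set.image_insert_eq])
      revert c
      unfold HasAtMostTwoNeighborsOutside
      decide
    · exact (hasAtMostTwoNeighborsOutside_inr i).mono (by simp [Set.insert_subset_iff])

theorem exists_commonNeighbors_hubs {y : Fin 9 ⊕ Fin (k + 3)}
    (hy : y ∉ ({.inl 0, .inl 1, .inl 6} : Set _)) :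
    ∃ q₁ q₂, q₁ ≠ q₂ ∧
      q₁ ∈ (satGraph k).commonNeighbors (.inl 0) (.inl 1) ∩ (satGraph k).neighborSet y ∧
      q₂ ∈ (satGraph k).commonNeighbors (.inl 0) (.inl 1) ∩ (satGraph k).neighborSet y := by
  rcases y with a | j
  · simp only [Set.mem_insert_iff, Sum.inl.injEq, Set.mem_singleton_iff] at hy
    obtain ⟨q₁, q₂, hq, hq₁, hq₂⟩ : ∃ q₁ q₂, q₁ ≠ q₂ ∧
        ((core.Adj 0 q₁ ∧ core.Adj 1 q₁) ∧ core.Adj a q₁) ∧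
        ((core.Adj 0 q₂ ∧ core.Adj 1 q₂) ∧ core.Adj a q₂) := by
      revert a; decide
    exact ⟨.inl q₁, .inl q₂, by simpa using hq, by simpa [mem_commonNeighbors] using hq₁,
      by simpa [mem_commonNeighbors] using hq₂⟩
  · refine ⟨.inr (j - 1), .inr (j + 1), by simpa using Fin.sub_one_ne_add_one j, ?_, ?_⟩ <;>
      simp [mem_commonNeighbors, cycleGraph_adj]

theorem containsK33_sup_edge_of_ne_inl_six {x y : Fin 9 ⊕ Fin (k + 3)}
    (hx : x ∈ (satGraph k).commonNeighbors (.inl 0) (.inl 1)) (hxy : x ≠ y)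
    (hnadj : ¬(satGraph k).Adj x y) (hy : y ≠ .inl 6) :
    ContainsK33 (satGraph k ⊔ edge x y) := by
  have hx' := (satGraph k).mem_commonNeighbors.1 hx
  have hy₀ : y ≠ .inl 0 := by rintro rfl; exact hnadj hx'.1.symm
  have hy₁ : y ≠ .inl 1 := by rintro rfl; exact hnadj hx'.2.symm
  obtain ⟨q₁, q₂, hq, hq₁, hq₂⟩ := exists_commonNeighbors_hubs (y := y) (by simp [*])
  exact containsK33_sup_edge hxy hnadj hy₀ hy₁ (by simp) hq hx hq₁ hq₂

theorem containsK33_sup_edge_of_mem_commonNeighbors {x y : Fin 9 ⊕ Fin (k + 3)}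
    (hx : x ∈ (satGraph k).commonNeighbors (.inl 0) (.inl 1)) (hxy : x ≠ y)
    (hnadj : ¬(satGraph k).Adj x y) : ContainsK33 (satGraph k ⊔ edge x y) := by
  by_cases hy : y = .inl 6
  · subst hy
    rw [edge_comm]
    exact containsK33_sup_edge_of_ne_inl_six (by simp [mem_commonNeighbors]; decide)
      hxy.symm (fun h => hnadj h.symm) hxy
  · exact containsK33_sup_edge_of_ne_inl_six hx hxy hnadj hy

theorem exists_eq_inl_of_notMem_commonNeighbors {x : Fin 9 ⊕ Fin (k + 3)}
    (hx : x ∉ (satGraph k).commonNeighbors (.inl 0) (.inl 1)) :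
    ∃ a ∈ ({0, 1, 7, 8} : Finset (Fin 9)), x = .inl a := by
  rcases x with a | i
  · simp only [mem_commonNeighbors, adj_inl_inl] at hx
    refine ⟨a, ?_, rfl⟩
    revert a; decide
  · simp [mem_commonNeighbors] at hx

theorem containsK33_sup_edge_inl_inl {a b : Fin 9} (ha : a ∈ ({0, 1, 7} : Finset (Fin 9)))
    (hb : b ∈ ({0, 1, 8} : Finset (Fin 9))) (hab : a ≠ b) :
    ContainsK33 (satGraph k ⊔ edge (.inl a) (.inl b)) := by
  obtain ⟨hnadj, h2a, h4a, hb2, hb4, h3, h5⟩ : ¬core.Adj a b ∧ core.Adj 2 a ∧ core.Adj 4 a ∧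
      b ≠ 2 ∧ b ≠ 4 ∧ ((core.Adj 2 3 ∧ core.Adj 4 3) ∧ core.Adj b 3) ∧
      ((core.Adj 2 5 ∧ core.Adj 4 5) ∧ core.Adj b 5) := by
    revert a b; decide
  exact containsK33_sup_edge (u := .inl 2) (w := .inl 4) (q₁ := .inl 3) (q₂ := .inl 5)
    (by simpa using hab) (by simpa using hnadj) (by simpa using hb2) (by simpa using hb4)
    (by simp) (by simp) (by simpa [mem_commonNeighbors] using ⟨h2a, h4a⟩)
    (by simpa [mem_commonNeighbors] using h3) (by simpa [mem_commonNeighbors] using h5)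

theorem containsK33_sup_edge_of_notMem_commonNeighbors {x y : Fin 9 ⊕ Fin (k + 3)}
    (hx : x ∉ (satGraph k).commonNeighbors (.inl 0) (.inl 1))
    (hy : y ∉ (satGraph k).commonNeighbors (.inl 0) (.inl 1)) (hxy : x ≠ y) :
    ContainsK33 (satGraph k ⊔ edge x y) := by
  obtain ⟨a, ha, rfl⟩ := exists_eq_inl_of_notMem_commonNeighbors hx
  obtain ⟨b, hb, rfl⟩ := exists_eq_inl_of_notMem_commonNeighbors hy
  have hab : a ≠ b := by simpa using hxy
  have : (a ∈ ({0, 1, 7} : Finset _) ∧ b ∈ ({0, 1, 8} : Finset _)) ∨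
      (b ∈ ({0, 1, 7} : Finset _) ∧ a ∈ ({0, 1, 8} : Finset _)) := by
    clear hx hy hxy
    revert a b; decide
  rcases this with ⟨ha', hb'⟩ | ⟨hb', ha'⟩
  · exact containsK33_sup_edge_inl_inl ha' hb' hab
  · rw [edge_comm]
    exact containsK33_sup_edge_inl_inl hb' ha' hab.symm

theorem k33Saturated : K33Saturated (satGraph k) := by
  refine ⟨not_containsK33, fun x y hxy hnadj => ?_⟩
  by_cases hx : x ∈ (satGraph k).commonNeighbors (.inl 0) (.inl 1)
  · exact containsK33_sup_edge_of_mem_commonNeighbors hx hxy hnadj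
  by_cases hy : y ∈ (satGraph k).commonNeighbors (.inl 0) (.inl 1)
  · rw [edge_comm]
    exact containsK33_sup_edge_of_mem_commonNeighbors hy hxy.symm fun h => hnadj h.symm
  exact containsK33_sup_edge_of_notMem_commonNeighbors hx hy hxy

theorem ncard_edgeSet_core : core.edgeSet.ncard = 18 := by
  rw [← coe_edgeFinset, Set.ncard_coe_finset]
  decide

theorem ncard_spokes_le (k : ℕ) : (spokes k).ncard ≤ 2 * (k + 3) := by
  have hinj : ∀ a : Fin 9, Injective fun i => s((.inl a : Fin 9 ⊕ Fin (k + 3)), .inr i) := by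
    intro a i j h
    simpa using h
  calc (spokes k).ncard ≤ (k + 3) + (k + 3) := by
        refine (Set.ncard_union_le _ _).trans ?_
        rw [Set.ncard_range_of_injective (hinj 0), Set.ncard_range_of_injective (hinj 1),
          Nat.card_fin]
    _ = 2 * (k + 3) := by ring

theorem ncard_edgeSet_le (k : ℕ) : (satGraph k).edgeSet.ncard ≤ 3 * k + 27 := by
  calc (satGraph k).edgeSet.ncard
      ≤ (core ⊕g cycleGraph (k + 3)).edgeSet.ncard + (fromEdgeSet (spokes k)).edgeSet.ncard := by
        rw [satGraph, edgeSet_sup]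
        exact Set.ncard_union_le _ _
    _ ≤ (18 + (k + 3)) + 2 * (k + 3) := by
        rw [ncard_edgeSet_sum, ncard_edgeSet_core, ncard_edgeSet_cycleGraph]
        gcongr
        rw [edgeSet_fromEdgeSet]
        exact (Set.ncard_le_ncard Set.sdiff_subset (Set.toFinite _)).trans (ncard_spokes_le k)
    _ = 3 * k + 27 := by ring

end satGraph

theorem stmt_6 (n : ℕ) (hn : 12 ≤ n) :
    ∃ G : SimpleGraph (Fin n), K33Saturated G ∧ G.edgeSet.ncard ≤ 3 * n - 9 := by
  obtain ⟨k, rfl⟩ := Nat.exists_eq_add_of_le' hn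
  let e : Fin 9 ⊕ Fin (k + 3) ≃ Fin (k + 12) := finSumFinEquiv.trans (finCongr (by omega))
  refine ⟨(satGraph k).map e, satGraph.k33Saturated.of_iso (Iso.map e _), ?_⟩
  rw [← (Iso.map e (satGraph k)).ncard_edgeSet_eq]
  have := satGraph.ncard_edgeSet_le k
  omega
end

section
/- Let G be a K_{3,3}-saturated graph with a vertex a, and define V_2 = {v ∉ N[a] : |N(v) ∩ N(a)| ≥ 2}. Then every vertex y outside N[a] with exactly one neighbor in N(a) has at least one neighbor in V_2. -/
open SimpleGraph

lemma key_aux {V : Type*} [Fintype V] (G : SimpleGraph V) (a y l0 l1 r0 r1 : V)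
    (hl : l0 ≠ l1) (hr : r0 ≠ r1) (hl0a : l0 ≠ a) (hl1a : l1 ≠ a)
    (hl0y : G.Adj l0 y) (hl1y : G.Adj l1 y)
    (har0 : G.Adj a r0) (har1 : G.Adj a r1)
    (h00 : G.Adj l0 r0) (h01 : G.Adj l0 r1) (h10 : G.Adj l1 r0) (h11 : G.Adj l1 r1)
    (h1 : (G.neighborSet y ∩ G.neighborSet a).ncard = 1) :
    ∃ v : V, v ∉ insert a (G.neighborSet a) ∧
      2 ≤ (G.neighborSet v ∩ G.neighborSet a).ncard ∧ G.Adj y v := by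
  by_cases hA0 : G.Adj a l0
  · by_cases hA1 : G.Adj a l1
    · exfalso
      have hsub : ({l0, l1} : Set V) ⊆ G.neighborSet y ∩ G.neighborSet a := by
        intro v hv
        rcases hv with rfl | hv
        · exact ⟨hl0y.symm, hA0⟩
        · rcases hv with rfl; exact ⟨hl1y.symm, hA1⟩
      have hle := Set.ncard_le_ncard hsub (Set.toFinite _)
      rw [Set.ncard_pair hl] at hle
      omega
    · refine ⟨l1, ?_, ?_, hl1y.symm⟩
      · simp only [Set.mem_insert_iff, mem_neighborSet]
        tauto
      · have hsub : ({r0, r1} : Set V) ⊆ G.neighborSet l1 ∩ G.neighborSet a := by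
          intro v hv
          rcases hv with rfl | hv
          · exact ⟨h10, har0⟩
          · rcases hv with rfl; exact ⟨h11, har1⟩
        have hle := Set.ncard_le_ncard hsub (Set.toFinite _)
        rwa [Set.ncard_pair hr] at hle
  · refine ⟨l0, ?_, ?_, hl0y.symm⟩
    · simp only [Set.mem_insert_iff, mem_neighborSet]
      tauto
    · have hsub : ({r0, r1} : Set V) ⊆ G.neighborSet l0 ∩ G.neighborSet a := by
        intro v hv
        rcases hv with rfl | hv
        · exact ⟨h00, har0⟩
        · rcases hv with rfl; exact ⟨h01, har1⟩
      have hle := Set.ncard_le_ncard hsub (Set.toFinite _)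
      rwa [Set.ncard_pair hr] at hle

theorem stmt_9 {V : Type*} [Fintype V] (G : SimpleGraph V) (hG : K33Saturated G)
    (a y : V) (hy : y ∉ insert a (G.neighborSet a))
    (h1 : (G.neighborSet y ∩ G.neighborSet a).ncard = 1) :
    ∃ v : V, v ∉ insert a (G.neighborSet a) ∧
      2 ≤ (G.neighborSet v ∩ G.neighborSet a).ncard ∧ G.Adj y v := by
  simp only [Set.mem_insert_iff, mem_neighborSet, not_or] at hy
  obtain ⟨hya, hyadj⟩ := hy
  obtain ⟨f, hinj, hadj⟩ := hG.2 y a hya (fun h => hyadj h.symm)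
  have hex : ∃ i j : Fin 3, (f (.inl i) = y ∧ f (.inr j) = a) ∨
      (f (.inl i) = a ∧ f (.inr j) = y) := by
    by_contra hcon
    push_neg at hcon
    apply hG.1
    refine ⟨f, hinj, fun u v huv => ?_⟩
    have h := hadj u v huv
    rw [sup_adj, edge_adj] at h
    rcases h with h | ⟨h, _⟩
    · exact h
    · exfalso
      match u, v, huv with
      | .inl i, .inr j, _ =>
        rcases h with ⟨h1', h2'⟩ | ⟨h1', h2'⟩
        · exact (hcon i j).1 h1' h2'
        · exact (hcon i j).2 h1' h2'
      | .inr j, .inl i, _ =>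
        rcases h with ⟨h1', h2'⟩ | ⟨h1', h2'⟩
        · exact (hcon i j).2 h2' h1'
        · exact (hcon i j).1 h2' h1'
      | .inl _, .inl _, huv => simp at huv
      | .inr _, .inr _, huv => simp at huv
  obtain ⟨i, j, hij⟩ := hex
  have fin3 : ∀ i : Fin 3, ∃ p q : Fin 3, p ≠ q ∧ p ≠ i ∧ q ≠ i := by decide
  obtain ⟨i1, i2, hi12, hi1, hi2⟩ := fin3 i
  obtain ⟨j1, j2, hj12, hj1, hj2⟩ := fin3 j
  have gen : ∀ p q : Fin 3, (f (.inl p) = y → f (.inr q) ≠ a) →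
      (f (.inl p) = a → f (.inr q) ≠ y) → G.Adj (f (.inl p)) (f (.inr q)) := by
    intro p q hc1 hc2
    have h := hadj (.inl p) (.inr q) (by simp)
    rw [sup_adj, edge_adj] at h
    rcases h with h | ⟨h, _⟩
    · exact h
    · rcases h with ⟨ha1, ha2⟩ | ⟨ha1, ha2⟩
      · exact absurd ha2 (hc1 ha1)
      · exact absurd ha2 (hc2 ha1)
  rcases hij with ⟨hiy, hja⟩ | ⟨hia, hjy⟩
  · -- case B: f (.inl i) = y, f (.inr j) = a
    have hinlney : ∀ p : Fin 3, p ≠ i → f (.inl p) ≠ y := fun p hp h =>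
      hp (by simpa using hinj (h.trans hiy.symm))
    have hinrney : ∀ q : Fin 3, f (.inr q) ≠ y := fun q h =>
      (by simp : (Sum.inr q : Fin 3 ⊕ Fin 3) ≠ .inl i) (hinj (h.trans hiy.symm))
    have hinrnea : ∀ q : Fin 3, q ≠ j → f (.inr q) ≠ a := fun q hq h =>
      hq (by simpa using hinj (h.trans hja.symm))
    refine key_aux G a y (f (.inr j1)) (f (.inr j2)) (f (.inl i1)) (f (.inl i2))
      (fun h => hj12 (by simpa using hinj h))
      (fun h => hi12 (by simpa using hinj h))
      (hinrnea j1 hj1) (hinrnea j2 hj2)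
      ?_ ?_ ?_ ?_ ?_ ?_ ?_ ?_ h1
    · rw [← hiy]; exact (gen i j1 (fun _ => hinrnea j1 hj1) (fun h => absurd (hiy.symm.trans h) hya)).symm
    · rw [← hiy]; exact (gen i j2 (fun _ => hinrnea j2 hj2) (fun h => absurd (hiy.symm.trans h) hya)).symm
    · rw [← hja]; exact gen i1 j (fun h => absurd h (hinlney i1 hi1)) (fun _ => fun h => hya (hja.symm.trans h).symm) |>.symm
    · rw [← hja]; exact gen i2 j (fun h => absurd h (hinlney i2 hi2)) (fun _ => fun h => hya (hja.symm.trans h).symm) |>.symm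
    · exact (gen i1 j1 (fun h => absurd h (hinlney i1 hi1)) (fun _ => hinrney j1)).symm
    · exact (gen i2 j1 (fun h => absurd h (hinlney i2 hi2)) (fun _ => hinrney j1)).symm
    · exact (gen i1 j2 (fun h => absurd h (hinlney i1 hi1)) (fun _ => hinrney j2)).symm
    · exact (gen i2 j2 (fun h => absurd h (hinlney i2 hi2)) (fun _ => hinrney j2)).symm
  · -- case A: f (.inl i) = a, f (.inr j) = y
    have hinlney : ∀ p : Fin 3, f (.inl p) ≠ y := fun p h =>
      (by simp : (Sum.inl p : Fin 3 ⊕ Fin 3) ≠ .inr j) (hinj (h.trans hjy.symm))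
    have hinlnea : ∀ p : Fin 3, p ≠ i → f (.inl p) ≠ a := fun p hp h =>
      hp (by simpa using hinj (h.trans hia.symm))
    have hinrney : ∀ q : Fin 3, q ≠ j → f (.inr q) ≠ y := fun q hq h =>
      hq (by simpa using hinj (h.trans hjy.symm))
    refine key_aux G a y (f (.inl i1)) (f (.inl i2)) (f (.inr j1)) (f (.inr j2))
      (fun h => hi12 (by simpa using hinj h))
      (fun h => hj12 (by simpa using hinj h))
      (hinlnea i1 hi1) (hinlnea i2 hi2)
      ?_ ?_ ?_ ?_ ?_ ?_ ?_ ?_ h1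
    · rw [← hjy]; exact gen i1 j (fun h => absurd h (hinlney i1)) (fun h => absurd h (hinlnea i1 hi1))
    · rw [← hjy]; exact gen i2 j (fun h => absurd h (hinlney i2)) (fun h => absurd h (hinlnea i2 hi2))
    · rw [← hia]; exact gen i j1 (fun h => absurd h (hinlney i)) (fun _ => hinrney j1 hj1)
    · rw [← hia]; exact gen i j2 (fun h => absurd h (hinlney i)) (fun _ => hinrney j2 hj2)
    · exact gen i1 j1 (fun h => absurd h (hinlney i1)) (fun _ => hinrney j1 hj1)
    · exact gen i1 j2 (fun h => absurd h (hinlney i1)) (fun _ => hinrney j2 hj2)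
    · exact gen i2 j1 (fun h => absurd h (hinlney i2)) (fun _ => hinrney j1 hj1)
    · exact gen i2 j2 (fun h => absurd h (hinlney i2)) (fun _ => hinrney j2 hj2)
end

section
/- Let G be a K_{3,3}-saturated graph with a vertex a. Then every vertex x outside N[a] that has no neighbor in N(a) admits two distinct neighbors of a, say a_i and a_j, with |N(x) ∩ N(a_i) ∩ N(a_j)| = 2. -/
open SimpleGraph

lemma exists_i12 (i0 : Fin 3) : ∃ i1 i2 : Fin 3, i1 ≠ i0 ∧ i2 ≠ i0 ∧ i1 ≠ i2 := by
  fin_cases i0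
  · exact ⟨1, 2, by decide, by decide, by decide⟩
  · exact ⟨0, 2, by decide, by decide, by decide⟩
  · exact ⟨0, 1, by decide, by decide, by decide⟩

lemma cbip_adj (i j : Fin 3) :
    (completeBipartiteGraph (Fin 3) (Fin 3)).Adj (Sum.inl i) (Sum.inr j) := by
  simp

lemma elim_inj {V : Type*} {a b c d e f : V}
    (hab : a ≠ b) (hac : a ≠ c) (had : a ≠ d) (hae : a ≠ e) (haf : a ≠ f)
    (hbc : b ≠ c) (hbd : b ≠ d) (hbe : b ≠ e) (hbf : b ≠ f)
    (hcd : c ≠ d) (hce : c ≠ e) (hcf : c ≠ f)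
    (hde : d ≠ e) (hdf : d ≠ f) (hef : e ≠ f) :
    Function.Injective (Sum.elim ![a,b,c] ![d,e,f]) := by
  rintro (p|p) (q|q) h <;> fin_cases p <;> fin_cases q <;> simp_all

lemma elim_adj {V : Type*} (G : SimpleGraph V) {a b c d e f : V}
    (h1 : G.Adj a d) (h2 : G.Adj a e) (h3 : G.Adj a f)
    (h4 : G.Adj b d) (h5 : G.Adj b e) (h6 : G.Adj b f)
    (h7 : G.Adj c d) (h8 : G.Adj c e) (h9 : G.Adj c f) :
    ∀ p q, (completeBipartiteGraph (Fin 3) (Fin 3)).Adj p q →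
      G.Adj (Sum.elim ![a,b,c] ![d,e,f] p) (Sum.elim ![a,b,c] ![d,e,f] q) := by
  have s1 := h1.symm; have s2 := h2.symm; have s3 := h3.symm
  have s4 := h4.symm; have s5 := h5.symm; have s6 := h6.symm
  have s7 := h7.symm; have s8 := h8.symm; have s9 := h9.symm
  rintro (p|p) (q|q) hpq
  · simp at hpq
  · fin_cases p <;> fin_cases q <;> simpa using by assumption
  · fin_cases p <;> fin_cases q <;> simpa using by assumption
  · simp at hpq

lemma aux_main {V : Type*} (G : SimpleGraph V) (hn : ¬ ContainsK33 G) (a x : V)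
    (hne : a ≠ x)
    (f : Fin 3 ⊕ Fin 3 → V) (finj : Function.Injective f)
    (hf : ∀ p q, (completeBipartiteGraph (Fin 3) (Fin 3)).Adj p q →
      (G ⊔ SimpleGraph.edge a x).Adj (f p) (f q))
    (i0 j0 : Fin 3) (ha : f (Sum.inl i0) = a) (hxv : f (Sum.inr j0) = x) :
    ∃ ai aj : V, ai ∈ G.neighborSet a ∧ aj ∈ G.neighborSet a ∧ ai ≠ aj ∧
      (G.neighborSet x ∩ G.neighborSet ai ∩ G.neighborSet aj).ncard = 2 := by
  have hsup : ∀ u v, (G ⊔ SimpleGraph.edge a x).Adj u v →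
      ¬(u = a ∧ v = x) → ¬(u = x ∧ v = a) → G.Adj u v := by
    intro u v h h1 h2
    rcases h with h | h
    · exact h
    · rw [SimpleGraph.edge_adj] at h
      rcases h.1 with h' | h' <;> tauto
  obtain ⟨i1, i2, hi1, hi2, hi12⟩ := exists_i12 i0
  obtain ⟨j1, j2, hj1, hj2, hj12⟩ := exists_i12 j0
  have hne_inl : ∀ i i' : Fin 3, i ≠ i' → f (Sum.inl i) ≠ f (Sum.inl i') :=
    fun i i' h he => h (Sum.inl.inj (finj he))
  have hne_inr : ∀ i i' : Fin 3, i ≠ i' → f (Sum.inr i) ≠ f (Sum.inr i') :=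
    fun i i' h he => h (Sum.inr.inj (finj he))
  have hne_lr : ∀ i j : Fin 3, f (Sum.inl i) ≠ f (Sum.inr j) :=
    fun i j he => by simpa using finj he
  set u2 := f (Sum.inl i1) with hu2def
  set u3 := f (Sum.inl i2) with hu3def
  set v2 := f (Sum.inr j1) with hv2def
  set v3 := f (Sum.inr j2) with hv3def
  have hv2x : v2 ≠ x := by rw [← hxv]; exact hne_inr j1 j0 hj1
  have hv3x : v3 ≠ x := by rw [← hxv]; exact hne_inr j2 j0 hj2
  have hu2a : u2 ≠ a := by rw [← ha]; exact hne_inl i1 i0 hi1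
  have hu3a : u3 ≠ a := by rw [← ha]; exact hne_inl i2 i0 hi2
  have hu2x : u2 ≠ x := by rw [← hxv]; exact hne_lr i1 j0
  have hu3x : u3 ≠ x := by rw [← hxv]; exact hne_lr i2 j0
  have hu2v2 : u2 ≠ v2 := hne_lr i1 j1
  have hu2v3 : u2 ≠ v3 := hne_lr i1 j2
  have hu3v2 : u3 ≠ v2 := hne_lr i2 j1
  have hu3v3 : u3 ≠ v3 := hne_lr i2 j2
  have hu23 : u2 ≠ u3 := hne_inl i1 i2 hi12
  have hv23 : v2 ≠ v3 := hne_inr j1 j2 hj12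
  have hAav2 : G.Adj a v2 := by
    have t := hf _ _ (cbip_adj i0 j1); rw [ha] at t
    exact hsup _ _ t (fun h => hv2x h.2) (fun h => hne h.1)
  have hAav3 : G.Adj a v3 := by
    have t := hf _ _ (cbip_adj i0 j2); rw [ha] at t
    exact hsup _ _ t (fun h => hv3x h.2) (fun h => hne h.1)
  have hAu2x : G.Adj u2 x := by
    have t := hf _ _ (cbip_adj i1 j0); rw [hxv] at t
    exact hsup _ _ t (fun h => hu2a h.1) (fun h => hne h.2.symm)
  have hAu3x : G.Adj u3 x := by
    have t := hf _ _ (cbip_adj i2 j0); rw [hxv] at t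
    exact hsup _ _ t (fun h => hu3a h.1) (fun h => hne h.2.symm)
  have hAu2v2 : G.Adj u2 v2 :=
    hsup _ _ (hf _ _ (cbip_adj i1 j1)) (fun h => hu2a h.1) (fun h => hu2x h.1)
  have hAu2v3 : G.Adj u2 v3 :=
    hsup _ _ (hf _ _ (cbip_adj i1 j2)) (fun h => hu2a h.1) (fun h => hu2x h.1)
  have hAu3v2 : G.Adj u3 v2 :=
    hsup _ _ (hf _ _ (cbip_adj i2 j1)) (fun h => hu3a h.1) (fun h => hu3x h.1)
  have hAu3v3 : G.Adj u3 v3 :=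
    hsup _ _ (hf _ _ (cbip_adj i2 j2)) (fun h => hu3a h.1) (fun h => hu3x h.1)
  have hset : G.neighborSet x ∩ G.neighborSet v2 ∩ G.neighborSet v3 = {u2, u3} := by
    ext w
    simp only [Set.mem_inter_iff, SimpleGraph.mem_neighborSet, Set.mem_insert_iff,
      Set.mem_singleton_iff]
    constructor
    · rintro ⟨⟨hwx, hwv2⟩, hwv3⟩
      by_contra hcon
      push_neg at hcon
      obtain ⟨hwu2, hwu3⟩ := hcon
      exfalso
      apply hn
      refine ⟨Sum.elim ![w, u2, u3] ![x, v2, v3], ?_, ?_⟩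
      · exact elim_inj hwu2 hwu3 hwx.ne' hwv2.ne' hwv3.ne'
          hu23 hu2x hu2v2 hu2v3 hu3x hu3v2 hu3v3
          hv2x.symm hv3x.symm hv23
      · exact elim_adj G hwx.symm hwv2.symm hwv3.symm
          hAu2x hAu2v2 hAu2v3 hAu3x hAu3v2 hAu3v3
    · rintro (rfl | rfl)
      · exact ⟨⟨hAu2x.symm, hAu2v2.symm⟩, hAu2v3.symm⟩
      · exact ⟨⟨hAu3x.symm, hAu3v2.symm⟩, hAu3v3.symm⟩
  exact ⟨v2, v3, hAav2, hAav3, hv23, by rw [hset]; exact Set.ncard_pair hu23⟩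

theorem stmt_10 {V : Type*} [Fintype V] (G : SimpleGraph V) (hG : K33Saturated G)
    (a x : V) (hx : x ∉ insert a (G.neighborSet a))
    (h0 : G.neighborSet x ∩ G.neighborSet a = ∅) :
    ∃ ai aj : V, ai ∈ G.neighborSet a ∧ aj ∈ G.neighborSet a ∧ ai ≠ aj ∧
      (G.neighborSet x ∩ G.neighborSet ai ∩ G.neighborSet aj).ncard = 2 := by
  have hx' : x ≠ a ∧ ¬ G.Adj a x := by
    constructor
    · intro h; exact hx (by simp [h])
    · intro h; exact hx (by simp [SimpleGraph.mem_neighborSet, h])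
  obtain ⟨hxa, hnadj⟩ := hx'
  have hne : a ≠ x := hxa.symm
  obtain ⟨f, finj, hf⟩ := hG.2 a x hne hnadj
  have key : ∃ i0 j0 : Fin 3, (f (Sum.inl i0) = a ∧ f (Sum.inr j0) = x) ∨
      (f (Sum.inl i0) = x ∧ f (Sum.inr j0) = a) := by
    by_contra hk
    push_neg at hk
    apply hG.1
    refine ⟨f, finj, ?_⟩
    intro p q hpq
    have t := hf p q hpq
    rcases t with t | t
    · exact t
    · rw [SimpleGraph.edge_adj] at t
      exfalso
      rcases p with i | i <;> rcases q with j | j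
      · simp at hpq
      · rcases t.1 with ⟨h1, h2⟩ | ⟨h1, h2⟩
        · exact (hk i j).1 h1 h2
        · exact (hk i j).2 h1 h2
      · rcases t.1 with ⟨h1, h2⟩ | ⟨h1, h2⟩
        · exact (hk j i).2 h2 h1
        · exact (hk j i).1 h2 h1
      · simp at hpq
  obtain ⟨i0, j0, ⟨h1, h2⟩ | ⟨h1, h2⟩⟩ := key
  · exact aux_main G hG.1 a x hne f finj hf i0 j0 h1 h2
  · refine aux_main G hG.1 a x hne (f ∘ Sum.swap) (finj.comp fun p q h => by simpa using congrArg Sum.swap h) ?_ j0 i0 h2 h1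
    intro p q hpq
    apply hf
    rcases p with p | p <;> rcases q with q | q <;> simp_all
end

section
/- Let G be a K_{3,3}-saturated graph with minimum degree 2, and let a be a vertex of degree 2 with neighbors a1, a2. If a1 and a2 are non-adjacent, then the number of vertices outside N[a] having at least one neighbor in {a1, a2} is at least 4. -/
/-!
Adding the missing edge `a₁a₂` creates a copy of `K_{3,3}`, and since `G` itself has none, the
copy uses the new edge, with `a₁` and `a₂` on opposite sides. The other two vertices on the
side of `a₁` and the other two on the side of `a₂` form a `K_{2,2}` in `G`, the former joined
to `a₂` and the latter to `a₁`. Each of these four vertices has a neighbour outside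
`N(a) = {a₁, a₂}`, so none of them is `a`; they are therefore four vertices outside `N[a]`
with a neighbour in `{a₁, a₂}`.
-/

open SimpleGraph

open Finset Function

section

variable {V : Type*} {G : SimpleGraph V}

lemma adj_of_sup_edge_adj {x y u v : V} (h : (G ⊔ edge x y).Adj u v) (hx : u ≠ x)
    (hy : u ≠ y) : G.Adj u v :=
  h.resolve_right fun h' => by rw [edge_adj] at h'; tauto

lemma completeBipartiteGraph_adj_swap {α : Type*} {p q : α ⊕ α} :
    (completeBipartiteGraph α α).Adj p.swap q.swap ↔ (completeBipartiteGraph α α).Adj p q := by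
  rcases p with p | p <;> rcases q with q | q <;> simp

lemma exists_inl_inr_of_containsK33_sup_edge (hfree : ¬ ContainsK33 G) {x y : V}
    {f : Fin 3 ⊕ Fin 3 → V} (hf : Injective f)
    (hadj : ∀ p q, (completeBipartiteGraph (Fin 3) (Fin 3)).Adj p q →
      (G ⊔ edge x y).Adj (f p) (f q)) :
    ∃ i j, f (.inl i) = x ∧ f (.inr j) = y ∨ f (.inl i) = y ∧ f (.inr j) = x := by
  by_contra! hnot
  refine hfree ⟨f, hf, fun p q hpq => (hadj p q hpq).resolve_right fun he => ?_⟩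
  rw [edge_adj] at he
  rcases p with i | i <;> rcases q with j | j
  · simp at hpq
  · exact he.1.elim (fun h => (hnot i j).1 h.1 h.2) fun h => (hnot i j).2 h.1 h.2
  · exact he.1.elim (fun h => (hnot j i).2 h.2 h.1) fun h => (hnot j i).1 h.2 h.1
  · simp at hpq

lemma exists_K33_through_edge (hfree : ¬ ContainsK33 G) {x y : V}
    (h : ContainsK33 (G ⊔ edge x y)) :
    ∃ f : Fin 3 ⊕ Fin 3 → V, Injective f ∧
      (∀ p q, (completeBipartiteGraph (Fin 3) (Fin 3)).Adj p q →
        (G ⊔ edge x y).Adj (f p) (f q)) ∧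
      ∃ i j, f (.inl i) = x ∧ f (.inr j) = y := by
  obtain ⟨f, hf, hadj⟩ := h
  obtain ⟨i, j, ⟨hi, hj⟩ | ⟨hi, hj⟩⟩ := exists_inl_inr_of_containsK33_sup_edge hfree hf hadj
  · exact ⟨f, hf, hadj, i, j, hi, hj⟩
  · refine ⟨f ∘ Sum.swap, hf.comp Sum.swap_leftInverse.injective,
      fun p q hpq => hadj _ _ (completeBipartiteGraph_adj_swap.2 hpq), j, i, hj, hi⟩

theorem K33Saturated.exists_K22 (hG : K33Saturated G) {x y : V} (hxy : x ≠ y)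
    (hnadj : ¬ G.Adj x y) :
    ∃ B C : Finset V, #B = 2 ∧ #C = 2 ∧ x ∉ B ∧ y ∉ C ∧ (∀ b ∈ B, G.Adj b y) ∧
      (∀ c ∈ C, G.Adj c x) ∧ ∀ b ∈ B, ∀ c ∈ C, G.Adj b c := by
  obtain ⟨f, hf, hadj, i, j, rfl, rfl⟩ := exists_K33_through_edge hG.1 (hG.2 x y hxy hnadj)
  have hlr : ∀ i' j', (completeBipartiteGraph (Fin 3) (Fin 3)).Adj (.inl i') (.inr j') := by
    simp
  have hrl : ∀ j' i', (completeBipartiteGraph (Fin 3) (Fin 3)).Adj (.inr j') (.inl i') := by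
    simp
  refine ⟨({i}ᶜ : Finset (Fin 3)).map ⟨f ∘ .inl, hf.comp Sum.inl_injective⟩,
    ({j}ᶜ : Finset (Fin 3)).map ⟨f ∘ .inr, hf.comp Sum.inr_injective⟩,
    by simp [card_compl], by simp [card_compl], ?_, ?_, ?_, ?_, ?_⟩
  · simp [hf.eq_iff]
  · simp [hf.eq_iff]
  · simp only [mem_map, mem_compl, mem_singleton, Embedding.coeFn_mk, comp_apply]
    rintro _ ⟨i', hi', rfl⟩
    exact adj_of_sup_edge_adj (hadj _ _ (hlr i' j)) (by simpa [hf.eq_iff]) (by simp [hf.eq_iff])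
  · simp only [mem_map, mem_compl, mem_singleton, Embedding.coeFn_mk, comp_apply]
    rintro _ ⟨j', hj', rfl⟩
    exact adj_of_sup_edge_adj (hadj _ _ (hrl j' i)) (by simp [hf.eq_iff]) (by simpa [hf.eq_iff])
  · simp only [mem_map, mem_compl, mem_singleton, Embedding.coeFn_mk, comp_apply]
    rintro _ ⟨i', hi', rfl⟩ _ ⟨j', -, rfl⟩
    exact adj_of_sup_edge_adj (hadj _ _ (hlr i' j')) (by simpa [hf.eq_iff]) (by simp [hf.eq_iff])

lemma notMem_insert_neighborSet {a x y u w : V} (hN : G.neighborSet a = {x, y})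
    (huw : G.Adj u w) (hu : u ∉ ({x, y} : Set V)) (hw : w ∉ ({x, y} : Set V)) :
    u ∉ insert a (G.neighborSet a) := by
  rw [hN, Set.mem_insert_iff, not_or]
  refine ⟨?_, hu⟩
  rintro rfl
  exact hw (hN ▸ huw)

end

theorem stmt_12_general {V : Type*} [Fintype V] (G : SimpleGraph V)
    (hG : K33Saturated G)
    (a a1 a2 : V) (hN : G.neighborSet a = {a1, a2})
    (h12 : a1 ≠ a2) (hnadj : ¬ G.Adj a1 a2) :
    4 ≤ {v : V | v ∉ insert a (G.neighborSet a) ∧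
          (G.Adj v a1 ∨ G.Adj v a2)}.ncard := by
  classical
  obtain ⟨B, C, hB, hC, ha1B, ha2C, hBa2, hCa1, hBC⟩ := hG.exists_K22 h12 hnadj
  have hB_out : ∀ b ∈ B, b ∉ ({a1, a2} : Set V) := fun b hb => by
    simp [ne_of_mem_of_not_mem hb ha1B, (hBa2 b hb).ne]
  have hC_out : ∀ c ∈ C, c ∉ ({a1, a2} : Set V) := fun c hc => by
    simp [(hCa1 c hc).ne, ne_of_mem_of_not_mem hc ha2C]
  obtain ⟨b₀, hb₀⟩ : B.Nonempty := card_pos.1 (by omega)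
  obtain ⟨c₀, hc₀⟩ : C.Nonempty := card_pos.1 (by omega)
  have hsub : (↑(B ∪ C) : Set V) ⊆ {v | v ∉ insert a (G.neighborSet a) ∧
      (G.Adj v a1 ∨ G.Adj v a2)} := by
    intro v hv
    rcases mem_union.1 hv with hv | hv
    · exact ⟨notMem_insert_neighborSet hN (hBC v hv c₀ hc₀) (hB_out v hv) (hC_out c₀ hc₀),
        .inr (hBa2 v hv)⟩
    · exact ⟨notMem_insert_neighborSet hN (hBC b₀ hb₀ v hv).symm (hC_out v hv)
        (hB_out b₀ hb₀), .inl (hCa1 v hv)⟩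
  have hdisj : Disjoint B C := disjoint_left.2 fun b hb hc => (hBC b hb b hc).ne rfl
  calc 4 = #(B ∪ C) := by rw [card_union_of_disjoint hdisj, hB, hC]
    _ = (↑(B ∪ C) : Set V).ncard := (Set.ncard_coe_finset _).symm
    _ ≤ _ := Set.ncard_le_ncard hsub (Set.toFinite _)

theorem stmt_12 {V : Type*} [Fintype V] (G : SimpleGraph V) [DecidableRel G.Adj]
    (hG : K33Saturated G) (hmin : ∀ v : V, 2 ≤ G.degree v)
    (a a1 a2 : V) (hdeg : G.degree a = 2) (hN : G.neighborSet a = {a1, a2})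
    (h12 : a1 ≠ a2) (hnadj : ¬ G.Adj a1 a2) :
    4 ≤ {v : V | v ∉ insert a (G.neighborSet a) ∧
          (G.Adj v a1 ∨ G.Adj v a2)}.ncard :=
  stmt_12_general G hG a a1 a2 hN h12 hnadj
end

section
/- Let G be a K_{3,3}-saturated graph and let a be a vertex with deg(a) = δ(G) = 2, with N(a) = {a1, a2}. Partition V(G) \ N[a] into V_2 = {x : |N(x) ∩ {a1, a2}| = 2}, V_3 = {x : |N(x) ∩ {a1, a2}| = 1}, and V_4 = {x : N(x) ∩ {a1, a2} = ∅}. Then for each x ∈ V_4 we have |N(x) ∩ N(a1) ∩ N(a2)| = 2 and N(x) ∩ N(a1) ∩ N(a2) ⊆ V_2. -/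
open SimpleGraph

lemma containsK33_of_six {V : Type*} (G : SimpleGraph V) (u1 u2 u3 w1 w2 w3 : V)
    (h12 : u1 ≠ u2) (h13 : u1 ≠ u3) (h23 : u2 ≠ u3)
    (g12 : w1 ≠ w2) (g13 : w1 ≠ w3) (g23 : w2 ≠ w3)
    (hadj : ∀ i j : Fin 3, G.Adj (![u1,u2,u3] i) (![w1,w2,w3] j)) :
    ContainsK33 G := by
  refine ⟨Sum.elim ![u1,u2,u3] ![w1,w2,w3], ?_, ?_⟩
  · rintro (i|i) (j|j) h <;> simp only [Sum.elim_inl, Sum.elim_inr] at h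
    · fin_cases i <;> fin_cases j <;> simp_all
    · exact absurd h (hadj i j).ne
    · exact absurd h.symm (hadj j i).ne
    · fin_cases i <;> fin_cases j <;> simp_all
  · rintro (i|i) (j|j) h
    · simp at h
    · simpa using hadj i j
    · simpa using (hadj j i).symm
    · simp at h

lemma extract_core {V : Type*} {G : SimpleGraph V} {a a1 a2 x : V}
    (hN : G.neighborSet a = {a1, a2})
    (hxa : x ≠ a) (ha1 : a ≠ a1) (ha2 : a ≠ a2)
    (f : Fin 3 ⊕ Fin 3 → V) (hinj : Function.Injective f)
    (hadjH : ∀ i j : Fin 3, (G ⊔ SimpleGraph.edge x a).Adj (f (.inl i)) (f (.inr j)))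
    (i0 j0 : Fin 3) (hfa : f (.inl i0) = a) (hfx : f (.inr j0) = x) :
    ∃ u v : V, u ≠ v ∧ G.Adj x u ∧ G.Adj a1 u ∧ G.Adj a2 u ∧
      G.Adj x v ∧ G.Adj a1 v ∧ G.Adj a2 v := by
  have hGa : ∀ j, j ≠ j0 → G.Adj a (f (.inr j)) := by
    intro j hj
    have h := hadjH i0 j
    rw [hfa, sup_adj] at h
    rcases h with h | h
    · exact h
    · rw [edge_adj] at h
      rcases h.1 with ⟨h1, _⟩ | ⟨_, h2⟩
      · exact absurd h1.symm hxa
      · exact absurd (hinj (hfx ▸ h2 : f (.inr j) = f (.inr j0))) (by simpa using hj)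
  obtain ⟨j1, j2, hj01, hj02, hj12⟩ :=
    (by decide : ∀ j : Fin 3, ∃ j1 j2 : Fin 3, j ≠ j1 ∧ j ≠ j2 ∧ j1 ≠ j2) j0
  have m1 : f (.inr j1) = a1 ∨ f (.inr j1) = a2 := by
    have := (hGa j1 (Ne.symm hj01))
    have : f (.inr j1) ∈ G.neighborSet a := this
    rw [hN] at this; simpa using this
  have m2 : f (.inr j2) = a1 ∨ f (.inr j2) = a2 := by
    have := (hGa j2 (Ne.symm hj02))
    have : f (.inr j2) ∈ G.neighborSet a := this
    rw [hN] at this; simpa using this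
  have hd : f (.inr j1) ≠ f (.inr j2) := fun h => hj12 (by simpa using hinj h)
  have hEx1 : ∃ j, j ≠ j0 ∧ f (.inr j) = a1 := by
    rcases m1 with h | h
    · exact ⟨j1, Ne.symm hj01, h⟩
    · rcases m2 with h' | h'
      · exact ⟨j2, Ne.symm hj02, h'⟩
      · exact absurd (h.trans h'.symm) hd
  have hEx2 : ∃ j, j ≠ j0 ∧ f (.inr j) = a2 := by
    rcases m2 with h | h
    · rcases m1 with h' | h'
      · exact absurd (h'.trans h.symm) hd
      · exact ⟨j1, Ne.symm hj01, h'⟩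
    · exact ⟨j2, Ne.symm hj02, h⟩
  have hGu : ∀ i, i ≠ i0 →
      G.Adj x (f (.inl i)) ∧ G.Adj a1 (f (.inl i)) ∧ G.Adj a2 (f (.inl i)) := by
    intro i hi
    have hne : f (.inl i) ≠ a := fun h =>
      hi (by simpa using hinj (h.trans hfa.symm : f (.inl i) = f (.inl i0)))
    refine ⟨?_, ?_, ?_⟩
    · have h := hadjH i j0
      rw [hfx, sup_adj] at h
      rcases h with h | h
      · exact h.symm
      · rw [edge_adj] at h
        rcases h.1 with ⟨_, h2⟩ | ⟨h1, _⟩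
        · exact absurd h2 hxa
        · exact absurd h1 hne
    · obtain ⟨j, hj, hfj⟩ := hEx1
      have h := hadjH i j
      rw [hfj, sup_adj] at h
      rcases h with h | h
      · exact h.symm
      · rw [edge_adj] at h
        rcases h.1 with ⟨_, h2⟩ | ⟨h1, _⟩
        · exact absurd h2.symm ha1
        · exact absurd h1 hne
    · obtain ⟨j, hj, hfj⟩ := hEx2
      have h := hadjH i j
      rw [hfj, sup_adj] at h
      rcases h with h | h
      · exact h.symm
      · rw [edge_adj] at h
        rcases h.1 with ⟨_, h2⟩ | ⟨h1, _⟩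
        · exact absurd h2.symm ha2
        · exact absurd h1 hne
  obtain ⟨i1, i2, hi01, hi02, hi12⟩ :=
    (by decide : ∀ i : Fin 3, ∃ i1 i2 : Fin 3, i ≠ i1 ∧ i ≠ i2 ∧ i1 ≠ i2) i0
  obtain ⟨hu1, hu2, hu3⟩ := hGu i1 (Ne.symm hi01)
  obtain ⟨hv1, hv2, hv3⟩ := hGu i2 (Ne.symm hi02)
  exact ⟨f (.inl i1), f (.inl i2), fun h => hi12 (by simpa using hinj h),
    hu1, hu2, hu3, hv1, hv2, hv3⟩

lemma extract_main {V : Type*} {G : SimpleGraph V} {a a1 a2 x : V}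
    (hno : ¬ ContainsK33 G)
    (hH : ContainsK33 (G ⊔ SimpleGraph.edge x a))
    (hN : G.neighborSet a = {a1, a2})
    (hxa : x ≠ a) (ha1 : a ≠ a1) (ha2 : a ≠ a2) :
    ∃ u v : V, u ≠ v ∧ G.Adj x u ∧ G.Adj a1 u ∧ G.Adj a2 u ∧
      G.Adj x v ∧ G.Adj a1 v ∧ G.Adj a2 v := by
  obtain ⟨f, hinj, hadjf⟩ := hH
  have hadjH : ∀ i j : Fin 3, (G ⊔ SimpleGraph.edge x a).Adj (f (.inl i)) (f (.inr j)) := by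
    intro i j
    exact hadjf _ _ (by simp)
  have key : ∃ i j : Fin 3,
      (f (.inl i) = a ∧ f (.inr j) = x) ∨ (f (.inl i) = x ∧ f (.inr j) = a) := by
    by_contra hc
    push_neg at hc
    apply hno
    refine ⟨f, hinj, ?_⟩
    intro p q hpq
    have hH' := hadjf p q hpq
    rw [sup_adj] at hH'
    rcases hH' with h | h
    · exact h
    · exfalso
      rw [edge_adj] at h
      rcases p with i | i <;> rcases q with j | j
      · simp [completeBipartiteGraph] at hpq
      · rcases h.1 with ⟨h1, h2⟩ | ⟨h1, h2⟩
        · exact (hc i j).2 h1 h2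
        · exact (hc i j).1 h1 h2
      · rcases h.1 with ⟨h1, h2⟩ | ⟨h1, h2⟩
        · exact (hc j i).1 h2 h1
        · exact (hc j i).2 h2 h1
      · simp [completeBipartiteGraph] at hpq
  obtain ⟨i0, j0, hcase⟩ := key
  rcases hcase with ⟨hfa, hfx⟩ | ⟨hfx', hfa'⟩
  · exact extract_core hN hxa ha1 ha2 f hinj hadjH i0 j0 hfa hfx
  · refine extract_core hN hxa ha1 ha2 (f ∘ Sum.swap) (hinj.comp (fun p q h => by rw [← Sum.swap_swap p, ← Sum.swap_swap q, h]))
      ?_ j0 i0 (by simpa using hfa') (by simpa using hfx')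
    intro i j
    simpa using (hadjH j i).symm

theorem stmt_14 {V : Type*} [Fintype V] (G : SimpleGraph V) [DecidableRel G.Adj]
    (hG : K33Saturated G) (hmin : ∀ v : V, 2 ≤ G.degree v)
    (a a1 a2 : V) (hdeg : G.degree a = 2) (hN : G.neighborSet a = {a1, a2})
    (h12 : a1 ≠ a2)
    (x : V) (hx : x ∉ insert a (G.neighborSet a))
    (hx4 : G.neighborSet x ∩ ({a1, a2} : Set V) = ∅) :
    (G.neighborSet x ∩ G.neighborSet a1 ∩ G.neighborSet a2).ncard = 2 ∧
    G.neighborSet x ∩ G.neighborSet a1 ∩ G.neighborSet a2 ⊆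
      {v : V | v ∉ insert a (G.neighborSet a) ∧
        (G.neighborSet v ∩ ({a1, a2} : Set V)).ncard = 2} := by
  have hxa : x ≠ a := fun h => hx (by rw [h]; exact Set.mem_insert a _)
  have hax : ¬ G.Adj a x := fun h => hx (Set.mem_insert_of_mem _ h)
  have haa1 : G.Adj a a1 := by
    have : a1 ∈ G.neighborSet a := by rw [hN]; simp
    exact this
  have haa2 : G.Adj a a2 := by
    have : a2 ∈ G.neighborSet a := by rw [hN]; simp
    exact this
  have ha1 : a ≠ a1 := haa1.ne
  have ha2 : a ≠ a2 := haa2.ne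
  have hxa1 : ¬ G.Adj x a1 := by
    intro h
    have : a1 ∈ (∅ : Set V) := hx4 ▸ ⟨h, by simp⟩
    exact this
  have hxa2 : ¬ G.Adj x a2 := by
    intro h
    have : a2 ∈ (∅ : Set V) := hx4 ▸ ⟨h, by simp⟩
    exact this
  have hxne1 : x ≠ a1 := fun h => hx (h ▸ Set.mem_insert_of_mem _ haa1)
  have hxne2 : x ≠ a2 := fun h => hx (h ▸ Set.mem_insert_of_mem _ haa2)
  have hH := hG.2 x a hxa (fun h => hax h.symm)
  obtain ⟨u, v, huv, hxu, ha1u, ha2u, hxv, ha1v, ha2v⟩ :=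
    extract_main hG.1 hH hN hxa ha1 ha2
  set S := G.neighborSet x ∩ G.neighborSet a1 ∩ G.neighborSet a2 with hSdef
  have huS : u ∈ S := ⟨⟨hxu, ha1u⟩, ha2u⟩
  have hvS : v ∈ S := ⟨⟨hxv, ha1v⟩, ha2v⟩
  have hSsub : S ⊆ {u, v} := by
    intro w hw
    by_contra hw'
    simp only [Set.mem_insert_iff, Set.mem_singleton_iff, not_or] at hw'
    obtain ⟨⟨hwx, hwa1⟩, hwa2⟩ := hw
    apply hG.1
    refine containsK33_of_six G u v w x a1 a2 huv (Ne.symm hw'.1) (Ne.symm hw'.2)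
      hxne1 hxne2 h12 ?_
    intro i j
    fin_cases i <;> fin_cases j <;>
      simp only [Matrix.cons_val_zero, Matrix.cons_val_one, Matrix.head_cons,
        Matrix.cons_val_two, Matrix.tail_cons] <;>
      first
        | exact hxu.symm | exact ha1u.symm | exact ha2u.symm
        | exact hxv.symm | exact ha1v.symm | exact ha2v.symm
        | exact hwx.symm | exact hwa1.symm | exact hwa2.symm
  have hSeq : S = {u, v} := by
    apply Set.Subset.antisymm hSsub
    intro w hw
    simp only [Set.mem_insert_iff, Set.mem_singleton_iff] at hw
    rcases hw with h | h
    · exact h ▸ huS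
    · exact h ▸ hvS
  constructor
  · rw [hSeq, Set.ncard_pair huv]
  · intro w hw
    obtain ⟨⟨hwx, hwa1⟩, hwa2⟩ := hw
    have hwx' : G.Adj x w := hwx
    have hwa1' : G.Adj a1 w := hwa1
    have hwa2' : G.Adj a2 w := hwa2
    constructor
    · intro hmem
      rcases hmem with h | h
      · subst h; exact hax hwx'.symm
      · rw [hN] at h
        simp only [Set.mem_insert_iff, Set.mem_singleton_iff] at h
        rcases h with h | h
        · subst h; exact hwa1'.ne rfl
        · subst h; exact hwa2'.ne rfl
    · have : G.neighborSet w ∩ ({a1, a2} : Set V) = {a1, a2} := by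
        apply Set.Subset.antisymm
        · exact Set.inter_subset_right
        · intro z hz
          simp only [Set.mem_insert_iff, Set.mem_singleton_iff] at hz
          rcases hz with h | h
          · subst h; exact ⟨hwa1'.symm, by simp⟩
          · subst h; exact ⟨hwa2'.symm, by simp⟩
      rw [this, Set.ncard_pair h12]
end
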